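/- Let V be a valuation domain with quotient field K and let W̃ be a residually transcendental extension of the completion V̂ to K̂(X). Then W̃ ∩ K(X) is a residually transcendental extension of V to K(X). -/

import Mathlib

/-!
Since `θ` is residually transcendental, a nonzero polynomial in `θ` has the value of its
coefficient of largest value, so the values of `K̂(θ)` are those of constants; as `K̂(X)` is
algebraic over `K̂(θ)`, the values of constants are then coinitial in the value group of `W̃`.
Hence the density of `K` in `K̂` makes `K(X)` dense in `K̂(X)` for the valuation `w̃` of `W̃`,
and a `z ∈ K(X)` with `w̃(z - θ) < 1` has the same residue as `θ`, so it is residually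
transcendental over `V`.
-/

/-- The ring homomorphism `K(X) → L(X)` induced by a field embedding `K → L`. -/
noncomputable def ratMap {K L : Type*} [Field K] [Field L] (f : K →+* L) :
    RatFunc K →+* RatFunc L :=
  RatFunc.mapRingHom (Polynomial.mapRingHom f)
    (by
      intro g hg
      rw [Submonoid.mem_comap]
      rw [mem_nonZeroDivisors_iff_ne_zero] at hg ⊢
      simp only [Polynomial.coe_mapRingHom]
      exact fun h => hg ((Polynomial.map_eq_zero_iff f.injective).mp h))

/-- A valuation domain `W` of `F(X)` is a *residually transcendental* extension of the
valuation domain `{u ≤ 1}` of `F`: some `θ ∈ W` has residue transcendental over the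
residue field of `{u ≤ 1}`, i.e. for every polynomial `g` with coefficients in `{u ≤ 1}`
whose reduction is nonzero (some coefficient has `u = 1`), the value `w(g(θ))` is `1`
(so `g(θ)` is a unit of `W`, and the residue of `θ` is a root of no nonzero reduced
polynomial). -/
def IsResTransExt {F Γ₀ : Type*} [Field F] [LinearOrderedCommGroupWithZero Γ₀]
    (u : Valuation F Γ₀) (W : ValuationSubring (RatFunc F)) : Prop :=
  ∃ θ : RatFunc F, θ ∈ W ∧ ∀ g : Polynomial F,
    (∀ i, u (g.coeff i) ≤ 1) → (∃ i, u (g.coeff i) = 1) →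
    W.valuation (Polynomial.eval₂ (RatFunc.C (K := F)) θ g) = 1

open Polynomial
open scoped IntermediateField

namespace Valuation

variable {R Γ₀ : Type*} [CommRing R] [LinearOrderedCommGroupWithZero Γ₀] (v : Valuation R Γ₀)

theorem map_eval_sub_le {p : R[X]} (hp : ∀ i, v (p.coeff i) ≤ 1) {a b : R} (ha : v a ≤ 1)
    (hb : v b ≤ 1) : v (p.eval a - p.eval b) ≤ v (a - b) := by
  rw [eval_eq_sum_range, eval_eq_sum_range, ← Finset.sum_sub_distrib]
  refine v.map_sum_le fun i _ => ?_
  rw [← mul_sub, ← geom_sum₂_mul, map_mul, map_mul, ← mul_assoc]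
  refine mul_le_of_le_one_left' (mul_le_one' (hp i) (v.map_sum_le fun k _ => ?_))
  rw [map_mul, map_pow, map_pow]
  exact mul_le_one' (pow_le_one' ha _) (pow_le_one' hb _)

theorem exists_le_algebraMap_of_isIntegral {A : Type*} [CommRing A] [Algebra A R] {x : R}
    (hx : IsIntegral A x) (h1 : 1 ≤ v x) : ∃ a : A, v x ≤ v (algebraMap A R a) := by
  obtain ⟨f, hm, hf⟩ := hx
  by_contra! h
  simp only [eval₂_eq_sum_range, Finset.sum_range_succ, hm.coeff_natDegree, map_one, one_mul,
    add_eq_zero_iff_eq_neg] at hf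
  apply_fun v at hf
  rw [map_neg, map_pow] at hf
  have hx0 : 0 < v x := zero_lt_one.trans_le h1
  refine (v.map_sum_lt (pow_ne_zero _ hx0.ne') fun i hi => ?_).ne hf
  rw [map_mul, map_pow]
  calc v (algebraMap A R (f.coeff i)) * v x ^ i < v x * v x ^ i :=
        mul_lt_mul_of_pos_right (h _) (pow_pos hx0 _)
    _ = v x ^ (i + 1) := (pow_succ' _ _).symm
    _ ≤ v x ^ f.natDegree := pow_le_pow_right₀ h1 (Finset.mem_range.mp hi)

theorem exists_forall_div_sub_lt {F : Type*} [Field F] (v : Valuation F Γ₀) (P : F) {Q : F}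
    (hQ : Q ≠ 0) {ρ : Γ₀} (hρ : ρ ≠ 0) :
    ∃ δ ≠ 0, ∀ P' Q', v (P' - P) < δ → v (Q' - Q) < δ → v (P' / Q' - P / Q) < ρ := by
  set q := v Q
  set M := max (v P) q
  have hq : 0 < q := zero_lt_iff.mpr ((v.ne_zero_iff).mpr hQ)
  have hM : 0 < M := hq.trans_le (le_max_right _ _)
  set δ := min q (ρ * (q * q) / M)
  have hδ : δ ≠ 0 := by
    rcases min_choice q (ρ * (q * q) / M) with h | h <;> simp only [δ, h]
    exacts [hq.ne', div_ne_zero (mul_ne_zero hρ (mul_pos hq hq).ne') hM.ne']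
  have hδM : δ * M ≤ ρ * (q * q) := (le_div_iff₀ hM).mp (min_le_right _ _)
  refine ⟨δ, hδ, fun P' Q' hP hQ' => ?_⟩
  have hQ'q : v Q' = q := v.map_eq_of_sub_lt (hQ'.trans_le (min_le_left _ _))
  have hQ'0 : Q' ≠ 0 := (v.ne_zero_iff).mp (by rw [hQ'q]; exact hq.ne')
  have hsmall {a b : F} (ha : v a < δ) (hb : v b ≤ M) : v (a * b) < ρ * (q * q) := by
    rw [map_mul]
    exact (mul_lt_mul_of_lt_of_le_of_nonneg_of_pos ha hb zero_le hM).trans_le hδM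
  have hdiff : P' / Q' - P / Q = ((P' - P) * Q - (Q' - Q) * P) / (Q' * Q) := by
    field_simp
    ring
  rw [hdiff, map_div₀, map_mul, hQ'q, div_lt_iff₀ (mul_pos hq hq)]
  exact (v.map_sub _ _).trans_lt
    (max_lt (hsmall hP (le_max_right _ _)) (hsmall hQ' (le_max_left _ _)))

end Valuation

theorem ValuationSubring.valuation_comap_eq_one {K L : Type*} [Field K] [Field L]
    (A : ValuationSubring L) (f : K →+* L) {x : K} (h : A.valuation (f x) = 1) :
    (A.comap f).valuation x = 1 := by
  have hle (y : K) (hy : A.valuation (f y) ≤ 1) : (A.comap f).valuation y ≤ 1 :=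
    ((A.comap f).valuation_le_one_iff y).mpr ((A.valuation_le_one_iff _).mp hy)
  have hx : 0 < (A.comap f).valuation x := by
    refine zero_lt_iff.mpr ((Valuation.ne_zero_iff _).mpr ?_)
    rintro rfl
    simp at h
  refine le_antisymm (hle x h.le) ?_
  have hinv := hle x⁻¹ (by rw [map_inv₀, map_inv₀, h, inv_one])
  rwa [map_inv₀, inv_le_one₀ hx] at hinv

section ratMap

variable {K L : Type*} [Field K] [Field L] (ι : K →+* L)

theorem ratMap_algebraMap (p : K[X]) :
    ratMap ι (algebraMap K[X] (RatFunc K) p) = algebraMap L[X] (RatFunc L) (p.map ι) := by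
  rw [ratMap, RatFunc.coe_mapRingHom_eq_coe_map]
  simpa using RatFunc.map_apply_div (Polynomial.mapRingHom ι) _ p 1

theorem ratMap_C (a : K) : ratMap ι (RatFunc.C a) = RatFunc.C (ι a) := by
  rw [← RatFunc.algebraMap_C, ratMap_algebraMap, Polynomial.map_C, RatFunc.algebraMap_C]

theorem ratMap_eval₂ (g : K[X]) (z : RatFunc K) :
    ratMap ι (g.eval₂ RatFunc.C z) = (g.map ι).eval₂ RatFunc.C (ratMap ι z) := by
  rw [hom_eval₂, eval₂_map]
  congr 1
  ext a
  exact ratMap_C ι a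

end ratMap

/-- `IsResTransExt u W` is `∃ θ ∈ W, IsResTransElem u W.valuation θ`. -/
def IsResTransElem {F Γ₀ Γ₁ : Type*} [Field F] [LinearOrderedCommGroupWithZero Γ₀]
    [LinearOrderedCommGroupWithZero Γ₁] (u : Valuation F Γ₀) (w : Valuation (RatFunc F) Γ₁)
    (θ : RatFunc F) : Prop :=
  ∀ g : F[X], (∀ i, u (g.coeff i) ≤ 1) → (∃ i, u (g.coeff i) = 1) → w (g.eval₂ RatFunc.C θ) = 1

namespace IsResTransElem

variable {F Γ₀ Γ₁ : Type*} [Field F] [LinearOrderedCommGroupWithZero Γ₀]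
  [LinearOrderedCommGroupWithZero Γ₁] {u : Valuation F Γ₀} {w : Valuation (RatFunc F) Γ₁}
  {θ : RatFunc F}

/-- The Gauss property: dividing `g` by a coefficient `c` of maximal value makes `g` primitive. -/
theorem exists_valuation_eval₂_eq (hθ : IsResTransElem u w θ) {g : F[X]} (hg : g ≠ 0) :
    ∃ c ≠ 0, w (g.eval₂ RatFunc.C θ) = w (RatFunc.C c) := by
  obtain ⟨k, hk, hmax⟩ := Finset.exists_max_image g.support (fun i => u (g.coeff i))
    (nonempty_support_iff.mpr hg)
  set c := g.coeff k
  have hc : c ≠ 0 := mem_support_iff.mp hk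
  have hprim : w ((C c⁻¹ * g).eval₂ RatFunc.C θ) = 1 := by
    refine hθ _ (fun i => ?_) ⟨k, by simp [c, hc]⟩
    rw [coeff_C_mul, map_mul, map_inv₀]
    by_cases hi : i ∈ g.support
    · exact inv_mul_le_one_of_le₀ (hmax i hi) zero_le
    · simp [notMem_support_iff.mp hi]
  have hsplit : g = C c * (C c⁻¹ * g) := by
    rw [← mul_assoc, ← C_mul, mul_inv_cancel₀ hc, C_1, one_mul]
  refine ⟨c, hc, ?_⟩
  rw [hsplit, eval₂_mul, eval₂_C, map_mul, hprim, mul_one]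

theorem transcendental (hθ : IsResTransElem u w θ) : Transcendental F θ := by
  rintro ⟨g, hg, hgθ⟩
  obtain ⟨c, hc, hval⟩ := hθ.exists_valuation_eval₂_eq hg
  rw [aeval_def, RatFunc.algebraMap_eq_C] at hgθ
  rw [hgθ, map_zero] at hval
  exact (w.ne_zero_iff.mpr ((_root_.map_ne_zero RatFunc.C).mpr hc)) hval.symm

theorem exists_valuation_eq_C (hθ : IsResTransElem u w θ) {e : RatFunc F} (he : e ∈ F⟮θ⟯)
    (he0 : e ≠ 0) : ∃ c ≠ 0, w e = w (RatFunc.C c) := by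
  obtain ⟨r, s, rfl⟩ := (IntermediateField.mem_adjoin_simple_iff F e).mp he
  have hr : r ≠ 0 := by rintro rfl; simp at he0
  have hs : s ≠ 0 := by rintro rfl; simp at he0
  obtain ⟨a, ha, hra⟩ := hθ.exists_valuation_eval₂_eq hr
  obtain ⟨b, hb, hsb⟩ := hθ.exists_valuation_eval₂_eq hs
  refine ⟨a / b, div_ne_zero ha hb, ?_⟩
  rw [map_div₀, map_div₀, map_div₀, aeval_def, aeval_def, RatFunc.algebraMap_eq_C, hra, hsb]

/-- `F(X)` is algebraic over `F(θ)`, whose nonzero elements have the values of constants. -/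
theorem exists_valuation_C_le (hθ : IsResTransElem u w θ) {y : RatFunc F} (hy : y ≠ 0) :
    ∃ c ≠ 0, w (RatFunc.C c) ≤ w y := by
  rcases le_or_gt 1 (w y) with h1 | h1
  · exact ⟨1, one_ne_zero, by rwa [map_one, map_one]⟩
  have hy0 : 0 < w y := zero_lt_iff.mpr (w.ne_zero_iff.mpr hy)
  have hnc : ¬∃ c, θ = RatFunc.C c := by
    rintro ⟨c, rfl⟩
    exact hθ.transcendental (by simpa using isAlgebraic_algebraMap (R := F) (A := RatFunc F) c)
  have := RatFunc.isAlgebraic_adjoin_simple_X' θ hnc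
  obtain ⟨e, he⟩ := w.exists_le_algebraMap_of_isIntegral
    (Algebra.IsAlgebraic.isAlgebraic (R := F⟮θ⟯) y⁻¹).isIntegral
    (by rw [map_inv₀]; exact (one_le_inv₀ hy0).mpr h1.le)
  have he0 : (e : RatFunc F) ≠ 0 := by
    rintro h
    rw [IntermediateField.algebraMap_apply, h, map_zero, map_inv₀] at he
    exact (inv_pos.mpr hy0).not_ge he
  obtain ⟨c, hc, hec⟩ := hθ.exists_valuation_eq_C e.2 he0
  refine ⟨c⁻¹, inv_ne_zero hc, ?_⟩
  rw [IntermediateField.algebraMap_apply, hec, map_inv₀] at he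
  have hc0 : 0 < w (RatFunc.C c) :=
    zero_lt_iff.mpr (w.ne_zero_iff.mpr ((_root_.map_ne_zero RatFunc.C).mpr hc))
  rw [map_inv₀, map_inv₀]
  exact (inv_le_comm₀ hy0 hc0).mp he

theorem of_valuation_sub_lt_one (hθ : IsResTransElem u w θ)
    (hC : ∀ a, u a ≤ 1 → w (RatFunc.C a) ≤ 1) (hθ1 : w θ ≤ 1) {θ' : RatFunc F}
    (hθ'1 : w θ' ≤ 1) (h : w (θ' - θ) < 1) : IsResTransElem u w θ' := by
  intro g hg1 hg
  have hθg := hθ g hg1 hg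
  refine (w.map_eq_of_sub_lt ?_).trans hθg
  rw [hθg, eval₂_eq_eval_map, eval₂_eq_eval_map]
  refine (w.map_eval_sub_le (fun i => ?_) hθ'1 hθ1).trans_lt h
  rw [coeff_map]
  exact hC _ (hg1 i)

theorem comap_ratMap {K L : Type*} [Field K] [Field L] {ι : K →+* L} {v : Valuation K Γ₀}
    {vhat : Valuation L Γ₀} (hext : ∀ x, vhat (ι x) = v x) {W : ValuationSubring (RatFunc L)}
    {z : RatFunc K} (hz : IsResTransElem vhat W.valuation (ratMap ι z)) :
    IsResTransElem v (W.comap (ratMap ι)).valuation z := by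
  intro g hg1 hg
  refine W.valuation_comap_eq_one _ ?_
  rw [ratMap_eval₂]
  exact hz (g.map ι) (by simpa [hext] using hg1) (by simpa [hext] using hg)

end IsResTransElem

section Approximation

variable {K L Γ₀ Γ₁ : Type*} [Field K] [Field L] [LinearOrderedCommGroupWithZero Γ₀]
  [LinearOrderedCommGroupWithZero Γ₁] (ι : K →+* L)

theorem exists_valuation_C_sub_lt {vhat : Valuation L Γ₀} {W : ValuationSubring (RatFunc L)}
    (hequiv : (W.valuation.comap RatFunc.C).IsEquiv vhat)
    (hcof : ∀ y : RatFunc L, y ≠ 0 → ∃ c ≠ 0, W.valuation (RatFunc.C c) ≤ W.valuation y)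
    (hdense : ∀ (y : L) (γ : Γ₀), γ ≠ 0 → ∃ b : K, vhat (y - ι b) < γ)
    (a : L) (δ : W.ValueGroup) (hδ : δ ≠ 0) :
    ∃ b : K, W.valuation (RatFunc.C (ι b) - RatFunc.C a) < δ := by
  obtain ⟨y, rfl⟩ := W.valuation_surjective δ
  obtain ⟨c, hc, hcy⟩ := hcof y ((Valuation.ne_zero_iff _).mp hδ)
  obtain ⟨b, hb⟩ := hdense a (vhat c) (vhat.ne_zero_iff.mpr hc)
  refine ⟨b, lt_of_lt_of_le ?_ hcy⟩
  rw [← map_sub]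
  rw [vhat.map_sub_swap] at hb
  exact hequiv.lt_iff_lt.mpr hb

variable (w : Valuation (RatFunc L) Γ₁)

theorem exists_valuation_map_sub_lt
    (hC : ∀ (a : L) (δ : Γ₁), δ ≠ 0 → ∃ b : K, w (RatFunc.C (ι b) - RatFunc.C a) < δ)
    (p : L[X]) {δ : Γ₁} (hδ : δ ≠ 0) :
    ∃ q : K[X], w (algebraMap L[X] (RatFunc L) (q.map ι) - algebraMap L[X] (RatFunc L) p) < δ := by
  induction p using Polynomial.induction_on' with
  | add p₁ p₂ h₁ h₂ =>
    obtain ⟨q₁, hq₁⟩ := h₁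
    obtain ⟨q₂, hq₂⟩ := h₂
    refine ⟨q₁ + q₂, ?_⟩
    rw [Polynomial.map_add, map_add, map_add, add_sub_add_comm]
    exact w.map_add_lt hq₁ hq₂
  | monomial n a =>
    have hX : 0 < w RatFunc.X ^ n :=
      pow_pos (zero_lt_iff.mpr (w.ne_zero_iff.mpr RatFunc.X_ne_zero)) _
    obtain ⟨b, hb⟩ := hC a (δ / w RatFunc.X ^ n) (div_ne_zero hδ hX.ne')
    refine ⟨monomial n b, ?_⟩
    rw [Polynomial.map_monomial, ← C_mul_X_pow_eq_monomial, ← C_mul_X_pow_eq_monomial, map_mul,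
      map_mul, map_pow, RatFunc.algebraMap_C, RatFunc.algebraMap_C, RatFunc.algebraMap_X, ← sub_mul,
      map_mul, map_pow]
    exact (lt_div_iff₀ hX).mp hb

theorem exists_valuation_ratMap_sub_lt
    (hC : ∀ (a : L) (δ : Γ₁), δ ≠ 0 → ∃ b : K, w (RatFunc.C (ι b) - RatFunc.C a) < δ)
    (y : RatFunc L) {ρ : Γ₁} (hρ : ρ ≠ 0) :
    ∃ z : RatFunc K, w (ratMap ι z - y) < ρ := by
  obtain ⟨δ, hδ, hdiv⟩ := w.exists_forall_div_sub_lt (algebraMap L[X] (RatFunc L) y.num)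
    (RatFunc.algebraMap_ne_zero y.denom_ne_zero) hρ
  obtain ⟨p, hp⟩ := exists_valuation_map_sub_lt ι w hC y.num hδ
  obtain ⟨q, hq⟩ := exists_valuation_map_sub_lt ι w hC y.denom hδ
  refine ⟨algebraMap K[X] (RatFunc K) p / algebraMap K[X] (RatFunc K) q, ?_⟩
  rw [map_div₀, ratMap_algebraMap, ratMap_algebraMap]
  simpa only [RatFunc.num_div_denom] using hdiv _ _ hp hq

end Approximation

/-- Let `K̂ ⊇ K` be the completion of `K` with respect to `v` (modelled
by a valued field extension `(L, v̂)` of `(K, v)` in which `K` is dense).  If `W̃` is a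
residually transcendental extension of `V̂ = {v̂ ≤ 1}` to `K̂(X)`, then `W̃ ∩ K(X)` is a
residually transcendental extension of `V = {v ≤ 1}` to `K(X)`. -/
theorem stmt_12 {K L Γ₀ : Type*} [Field K] [Field L]
    [LinearOrderedCommGroupWithZero Γ₀]
    (ι : K →+* L) (v : Valuation K Γ₀) (vhat : Valuation L Γ₀)
    (hext : ∀ x : K, vhat (ι x) = v x)
    (hdense : ∀ (y : L) (γ : Γ₀), γ ≠ 0 → ∃ b : K, vhat (y - ι b) < γ)
    (Wt : ValuationSubring (RatFunc L))
    (hWt : ∀ x : L, RatFunc.C x ∈ Wt ↔ vhat x ≤ 1)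
    (hrt : IsResTransExt vhat Wt) :
    (∀ x : K, RatFunc.C x ∈ Wt.comap (ratMap ι) ↔ v x ≤ 1) ∧
    IsResTransExt v (Wt.comap (ratMap ι)) := by
  refine ⟨fun x => by rw [ValuationSubring.mem_comap, ratMap_C, hWt, hext], ?_⟩
  obtain ⟨θ, hθW, hθ⟩ := hrt
  replace hθ : IsResTransElem vhat Wt.valuation θ := hθ
  have hCle (a : L) : Wt.valuation (RatFunc.C a) ≤ 1 ↔ vhat a ≤ 1 :=
    (Wt.valuation_le_one_iff _).trans (hWt a)
  have hequiv : (Wt.valuation.comap RatFunc.C).IsEquiv vhat :=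
    Valuation.isEquiv_iff_val_le_one.mpr (hCle _)
  obtain ⟨z, hz⟩ := exists_valuation_ratMap_sub_lt ι Wt.valuation
    (exists_valuation_C_sub_lt ι hequiv (fun _ => hθ.exists_valuation_C_le) hdense) θ one_ne_zero
  have hθ1 : Wt.valuation θ ≤ 1 := (Wt.valuation_le_one_iff θ).mpr hθW
  have hz1 : Wt.valuation (ratMap ι z) ≤ 1 := by
    simpa using (Wt.valuation.map_add (ratMap ι z - θ) θ).trans (max_le hz.le hθ1)
  exact ⟨z, (Wt.valuation_le_one_iff _).mp hz1,
    (hθ.of_valuation_sub_lt_one (fun a => (hCle a).mpr) hθ1 hz1 hz).comap_ratMap hext⟩
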